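/- Let R be an algebraic curvature tensor on ℝⁿ and u, v ∈ ℝⁿ. Then R(u, v, v, u) = R(u − v, v, v, u − v); moreover, if |u| ≤ 1 and |v| ≤ 1, then R(u,v,v,u)/|u−v| ≤ 2·sup over orthonormal pairs (x,y) of |R(x,y,y,x)| (when u ≠ v). -/

import Mathlib

open scoped InnerProductSpace

/-- An algebraic curvature tensor on a real vector space: a 4-linear map (linearity is
required in the first slot; together with the symmetries this gives full multilinearity)
which is antisymmetric in the first two and in the last two slots and symmetric under
exchange of the two pairs. -/
structure CurvTensor (E : Type*) [AddCommGroup E] [Module ℝ E] where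
  R : E → E → E → E → ℝ
  add_left : ∀ x x' y z w, R (x + x') y z w = R x y z w + R x' y z w
  smul_left : ∀ (c : ℝ) x y z w, R (c • x) y z w = c * R x y z w
  antisym_fst : ∀ x y z w, R x y z w = -R y x z w
  antisym_snd : ∀ x y z w, R x y z w = -R x y w z
  pair_symm : ∀ x y z w, R x y z w = R z w x y

/-!
Put `w = u - v`. The quantity `R(x,y,y,x)` does not change when a multiple of `x` is added to
`y` or a multiple of `y` to `x`; this gives the identity, and allows replacing `v` by its
component `b` orthogonal to `w`. Normalising, `R(w,b,b,w) = |w|²|b|² R(x,y,y,x)` for an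
orthonormal pair `(x,y)`, and `|b| ≤ |v| ≤ 1`, `|w| ≤ 2` give `|w|²|b|² ≤ 2|w|`. The supremum
is finite because a multilinear form on a finite-dimensional space is bounded on the unit ball.
-/

lemma exists_eq_add_smul_inner_eq_zero {E : Type*} [NormedAddCommGroup E] [InnerProductSpace ℝ E]
    (w v : E) : ∃ (b : E) (c : ℝ), v = b + c • w ∧ ⟪w, b⟫_ℝ = 0 ∧ ‖b‖ ≤ ‖v‖ := by
  set K := ℝ ∙ w
  set c := ⟪w, v⟫_ℝ / ‖w‖ ^ 2
  have hvb : v = (v - K.starProjection v) + c • w := by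
    rw [Submodule.starProjection_singleton, RCLike.ofReal_real_eq_id, id, sub_add_cancel]
  set b := v - K.starProjection v
  have horth : ⟪w, b⟫_ℝ = 0 :=
    Submodule.mem_orthogonal_singleton_iff_inner_right.1 (K.sub_starProjection_mem_orthogonal v)
  have hpyth : ‖v‖ * ‖v‖ = ‖b‖ * ‖b‖ + ‖c • w‖ * ‖c • w‖ := by
    conv_lhs => rw [hvb]
    refine norm_add_sq_eq_norm_sq_add_norm_sq_real ?_
    rw [real_inner_smul_right, real_inner_comm w, horth, mul_zero]
  refine ⟨b, c, hvb, horth, ?_⟩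
  nlinarith [norm_nonneg v, norm_nonneg b, mul_self_nonneg ‖c • w‖]

namespace CurvTensor

section Algebraic

variable {E : Type*} [AddCommGroup E] [Module ℝ E] (T : CurvTensor E)

lemma isLinearMap_first (y z w : E) : IsLinearMap ℝ fun x => T.R x y z w :=
  ⟨fun x x' => T.add_left x x' y z w, fun c x => T.smul_left c x y z w⟩

lemma isLinearMap_second (x z w : E) : IsLinearMap ℝ fun y => T.R x y z w := by
  refine ⟨fun y y' => ?_, fun c y => ?_⟩
  · simp only [T.antisym_fst x, T.add_left]; ring
  · simp only [T.antisym_fst x, T.smul_left, smul_eq_mul]; ring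

lemma isLinearMap_third (x y w : E) : IsLinearMap ℝ fun z => T.R x y z w := by
  simpa only [T.pair_symm x y] using T.isLinearMap_first _ _ _

lemma isLinearMap_fourth (x y z : E) : IsLinearMap ℝ fun w => T.R x y z w := by
  simpa only [T.pair_symm x y] using T.isLinearMap_second _ _ _

lemma R_self_left (x z w : E) : T.R x x z w = 0 := by
  linarith [T.antisym_fst x x z w]

lemma R_self_right (x y z : E) : T.R x y z z = 0 := by
  linarith [T.antisym_snd x y z z]

lemma R_comm (x y : E) : T.R x y y x = T.R y x x y := by
  rw [T.antisym_fst, T.antisym_snd, neg_neg]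

lemma R_add_smul_second (x y : E) (c : ℝ) :
    T.R x (y + c • x) (y + c • x) x = T.R x y y x := by
  simp only [(T.isLinearMap_second _ _ _).map_add, (T.isLinearMap_second _ _ _).map_smul,
    (T.isLinearMap_third _ _ _).map_add, (T.isLinearMap_third _ _ _).map_smul, smul_eq_mul,
    T.R_self_left, T.R_self_right]
  ring

lemma R_add_smul_first (x y : E) (c : ℝ) :
    T.R (x + c • y) y y (x + c • y) = T.R x y y x := by
  rw [T.R_comm, R_add_smul_second, R_comm]

lemma R_smul_smul (a b : ℝ) (x y : E) :
    T.R (a • x) (b • y) (b • y) (a • x) = (a * b) ^ 2 * T.R x y y x := by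
  simp only [(T.isLinearMap_first _ _ _).map_smul, (T.isLinearMap_second _ _ _).map_smul,
    (T.isLinearMap_third _ _ _).map_smul, (T.isLinearMap_fourth _ _ _).map_smul, smul_eq_mul]
  ring

end Algebraic

section Euclidean

variable {E : Type*} [NormedAddCommGroup E] [InnerProductSpace ℝ E]

lemma _root_.LinearMap.abs_le_sum_abs_of_norm_le_one {ι : Type*} [Fintype ι]
    (b : OrthonormalBasis ι ℝ E) (f : E →ₗ[ℝ] ℝ) {x : E} (hx : ‖x‖ ≤ 1) :
    |f x| ≤ ∑ i, |f (b i)| := by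
  have hcoord (i : ι) : |⟪b i, x⟫_ℝ| ≤ 1 := by
    calc |⟪b i, x⟫_ℝ| ≤ ‖b i‖ * ‖x‖ := abs_real_inner_le_norm _ _
      _ ≤ 1 := by rwa [b.norm_eq_one, one_mul]
  calc |f x| = |∑ i, ⟪b i, x⟫_ℝ * f (b i)| := by
        conv_lhs => rw [← b.sum_repr' x]
        simp only [map_sum, map_smul, smul_eq_mul]
    _ ≤ ∑ i, |⟪b i, x⟫_ℝ * f (b i)| := Finset.abs_sum_le_sum_abs _ _
    _ ≤ ∑ i, |f (b i)| := Finset.sum_le_sum fun i _ => by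
        rw [abs_mul]; exact mul_le_of_le_one_left (abs_nonneg _) (hcoord i)

variable (T : CurvTensor E)

lemma abs_R_le_sum {ι : Type*} [Fintype ι] (b : OrthonormalBasis ι ℝ E) {x y z w : E}
    (hx : ‖x‖ ≤ 1) (hy : ‖y‖ ≤ 1) (hz : ‖z‖ ≤ 1) (hw : ‖w‖ ≤ 1) :
    |T.R x y z w| ≤ ∑ i, ∑ j, ∑ k, ∑ l, |T.R (b i) (b j) (b k) (b l)| :=
  calc |T.R x y z w| ≤ ∑ i, |T.R (b i) y z w| :=
        ((T.isLinearMap_first y z w).mk' _).abs_le_sum_abs_of_norm_le_one b hx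
    _ ≤ ∑ i, ∑ j, |T.R (b i) (b j) z w| := Finset.sum_le_sum fun _ _ =>
        ((T.isLinearMap_second _ z w).mk' _).abs_le_sum_abs_of_norm_le_one b hy
    _ ≤ ∑ i, ∑ j, ∑ k, |T.R (b i) (b j) (b k) w| := Finset.sum_le_sum fun _ _ =>
        Finset.sum_le_sum fun _ _ =>
          ((T.isLinearMap_third _ _ w).mk' _).abs_le_sum_abs_of_norm_le_one b hz
    _ ≤ ∑ i, ∑ j, ∑ k, ∑ l, |T.R (b i) (b j) (b k) (b l)| := Finset.sum_le_sum fun _ _ =>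
        Finset.sum_le_sum fun _ _ => Finset.sum_le_sum fun _ _ =>
          ((T.isLinearMap_fourth _ _ _).mk' _).abs_le_sum_abs_of_norm_le_one b hw

noncomputable def sectionalSup : ℝ :=
  sSup {r : ℝ | ∃ x y : E, ⟪x, y⟫_ℝ = 0 ∧ ‖x‖ = 1 ∧ ‖y‖ = 1 ∧ r = |T.R x y y x|}

lemma sectionalSup_nonneg : 0 ≤ T.sectionalSup :=
  Real.sSup_nonneg fun _ ⟨_, _, _, _, _, hr⟩ => hr ▸ abs_nonneg _

lemma R_le_sectionalSup [FiniteDimensional ℝ E] {x y : E} (hxy : ⟪x, y⟫_ℝ = 0) (hx : ‖x‖ = 1)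
    (hy : ‖y‖ = 1) : T.R x y y x ≤ T.sectionalSup := by
  have hbdd : BddAbove {r : ℝ | ∃ x y : E, ⟪x, y⟫_ℝ = 0 ∧ ‖x‖ = 1 ∧ ‖y‖ = 1 ∧
      r = |T.R x y y x|} := by
    let b := stdOrthonormalBasis ℝ E
    refine ⟨∑ i, ∑ j, ∑ k, ∑ l, |T.R (b i) (b j) (b k) (b l)|, ?_⟩
    rintro r ⟨x, y, -, hx, hy, rfl⟩
    exact T.abs_R_le_sum b hx.le hy.le hy.le hx.le
  exact (le_abs_self _).trans (le_csSup hbdd ⟨x, y, hxy, hx, hy, rfl⟩)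

lemma R_le_sq_mul_sq_mul_sectionalSup [FiniteDimensional ℝ E] {x y : E} (hxy : ⟪x, y⟫_ℝ = 0) :
    T.R x y y x ≤ ‖x‖ ^ 2 * ‖y‖ ^ 2 * T.sectionalSup := by
  rcases eq_or_ne x 0 with rfl | hx
  · simp [(T.isLinearMap_first _ _ _).map_zero]
  rcases eq_or_ne y 0 with rfl | hy
  · simp [(T.isLinearMap_second _ _ _).map_zero]
  have hunit : T.R (‖x‖⁻¹ • x) (‖y‖⁻¹ • y) (‖y‖⁻¹ • y) (‖x‖⁻¹ • x) ≤ T.sectionalSup :=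
    T.R_le_sectionalSup (by simp [real_inner_smul_left, real_inner_smul_right, hxy])
      (norm_smul_inv_norm hx) (norm_smul_inv_norm hy)
  rw [R_smul_smul] at hunit
  have hxy0 : 0 < (‖x‖⁻¹ * ‖y‖⁻¹) ^ 2 := by positivity
  calc T.R x y y x ≤ T.sectionalSup / (‖x‖⁻¹ * ‖y‖⁻¹) ^ 2 := (le_div_iff₀' hxy0).2 hunit
    _ = ‖x‖ ^ 2 * ‖y‖ ^ 2 * T.sectionalSup := by field_simp

end Euclidean

end CurvTensor

theorem curv_diagonal_bound_general (n : ℕ)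
    (T : CurvTensor (EuclideanSpace ℝ (Fin n)))
    (u v : EuclideanSpace ℝ (Fin n)) :
    T.R u v v u = T.R (u - v) v v (u - v) ∧
      (‖u‖ ≤ 1 → ‖v‖ ≤ 1 → u ≠ v →
        T.R u v v u / ‖u - v‖ ≤
          2 * sSup {r : ℝ | ∃ x y : EuclideanSpace ℝ (Fin n),
            ⟪x, y⟫_ℝ = 0 ∧ ‖x‖ = 1 ∧ ‖y‖ = 1 ∧ r = |T.R x y y x|}) := by
  have hshear : T.R u v v u = T.R (u - v) v v (u - v) := by
    simpa [sub_eq_add_neg] using (T.R_add_smul_first u v (-1)).symm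
  refine ⟨hshear, fun hu hv _ => ?_⟩
  change T.R u v v u / ‖u - v‖ ≤ 2 * T.sectionalSup
  obtain ⟨b, c, hvb, horth, hb⟩ := exists_eq_add_smul_inner_eq_zero (u - v) v
  have hw : ‖u - v‖ ≤ 2 := (norm_sub_le u v).trans (by linarith)
  have hcoef : ‖u - v‖ ^ 2 * ‖b‖ ^ 2 ≤ ‖u - v‖ * 2 := by
    have := pow_le_one₀ (norm_nonneg b) (hb.trans hv) (n := 2)
    nlinarith [norm_nonneg (u - v)]
  refine div_le_of_le_mul₀ (norm_nonneg _) (by linarith [T.sectionalSup_nonneg]) ?_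
  calc T.R u v v u = T.R (u - v) b b (u - v) := by
        rw [hshear, ← T.R_add_smul_second (u - v) b c, ← hvb]
    _ ≤ ‖u - v‖ ^ 2 * ‖b‖ ^ 2 * T.sectionalSup := T.R_le_sq_mul_sq_mul_sectionalSup horth
    _ ≤ ‖u - v‖ * 2 * T.sectionalSup := by gcongr; exact T.sectionalSup_nonneg
    _ = 2 * T.sectionalSup * ‖u - v‖ := by ring

/-- `R(u,v,v,u) = R(u-v,v,v,u-v)`; moreover for distinct `u, v` in the closed unit ball,
`R(u,v,v,u)/|u-v| ≤ 2·sup { |R(x,y,y,x)| : (x,y) orthonormal }`. -/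
theorem curv_diagonal_bound (n : ℕ) (hn : 2 ≤ n)
    (T : CurvTensor (EuclideanSpace ℝ (Fin n)))
    (u v : EuclideanSpace ℝ (Fin n)) :
    T.R u v v u = T.R (u - v) v v (u - v) ∧
      (‖u‖ ≤ 1 → ‖v‖ ≤ 1 → u ≠ v →
        T.R u v v u / ‖u - v‖ ≤
          2 * sSup {r : ℝ | ∃ x y : EuclideanSpace ℝ (Fin n),
            ⟪x, y⟫_ℝ = 0 ∧ ‖x‖ = 1 ∧ ‖y‖ = 1 ∧ r = |T.R x y y x|}) :=
  curv_diagonal_bound_general n T u v
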